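/- Under the model rollout setup, let f : S × A → S be a differentiable ‘true dynamics’ map with ‖D_s f(s,a)‖ ≤ L_f and ‖D_a f(s,a)‖ ≤ L_f for all (s,a), let (s_i, a_i) be the rollout generated from the same constant initial state s₀ and the same policy π but with f in place of f̂, and suppose ε_f ≥ 0 bounds, for every i ≥ 1 and every θ, the sum ‖D_s f̂(ŝ_{i−1}(θ), â_{i−1}(θ)) − D_s f(s_{i−1}(θ), a_{i−1}(θ))‖ + ‖D_a f̂(ŝ_{i−1}(θ), â_{i−1}(θ)) − D_a f(s_{i−1}(θ), a_{i−1}(θ))‖. Then for every i ≥ 1 and θ, ‖D_θ â_i(θ) − D_θ a_i(θ)‖ ≤ L_π · ( (ε_f + 2·L_f·L_π)·K̂(i−1) + 2·L_f·L_θ ) · ∑_{j=0}^{i−1} M_f^j + 2·L_π·K̂(i) + 2·L_θ, where M_f = L_f·(1 + L_π) and K̂(i) = (1 + L_π)·L_f̂·L_θ·∑_{j=0}^{i−1} (L_f̂(1+L_π))^j + L_θ. -/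

import Mathlib

open Finset

/-- Model rollout: states `ŝ_i : Θ → S` generated from the constant initial state `s₀`
by `ŝ₀(θ) = s₀`, `ŝ_{i+1}(θ) = f(ŝ_i(θ), π(θ, ŝ_i(θ)))`. -/
def sHat {Θ S A : Type*} (π : Θ × S → A) (f : S × A → S) (s₀ : S) : ℕ → Θ → S
  | 0 => fun _ => s₀
  | (i + 1) => fun θ => f (sHat π f s₀ i θ, π (θ, sHat π f s₀ i θ))

/-- Model rollout: actions `â_i(θ) = π(θ, ŝ_i(θ))`. -/
def aHat {Θ S A : Type*} (π : Θ × S → A) (f : S × A → S) (s₀ : S) (i : ℕ) : Θ → A :=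
  fun θ => π (θ, sHat π f s₀ i θ)

/-- `K̂(i) = (1 + L_π) · L_f̂ · L_θ · ∑_{j=0}^{i−1} (L_f̂ (1 + L_π))^j + L_θ`. -/
noncomputable def Khat (Lπ Lf Lθ : ℝ) (i : ℕ) : ℝ :=
  (1 + Lπ) * Lf * Lθ * ∑ j ∈ Finset.range i, (Lf * (1 + Lπ)) ^ j + Lθ

/-!
Differentiating the rollout recursions by the chain rule gives
`Dâ_i = ∂_θπ + ∂_sπ ∘ Dŝ_i` and `Dŝ_{i+1} = ∂_s f̂ ∘ Dŝ_i + ∂_a f̂ ∘ Dâ_i`. On the model rollout this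
yields `‖Dŝ_{i+1}‖ ≤ L_f̂ L_θ + L_f̂ (1 + L_π) ‖Dŝ_i‖`, so `‖Dŝ_i‖` and `‖Dâ_i‖` are both at most
`K̂(i)`. Splitting `B ∘ D - B' ∘ D' = (B - B') ∘ D + B' ∘ (D - D')` in the differences `Δa_i`,
`Δs_i` of the two rollouts gives `Δa_i ≤ 2 L_θ + 2 L_π K̂(i) + L_π Δs_i` and
`Δs_{i+1} ≤ C_i + M_f Δs_i` with `C_i = (ε_f + 2 L_f L_π) K̂(i) + 2 L_f L_θ`. As `C` is
nondecreasing and `Δs_0 = 0`, unrolling gives `Δs_i ≤ C_{i-1} ∑_{j<i} M_f^j`, which is then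
substituted into the bound for `Δa_i`.
-/

open ContinuousLinearMap

section PartialDerivatives

variable {𝕜 W X Y Z : Type*} [NontriviallyNormedField 𝕜]
  [NormedAddCommGroup W] [NormedSpace 𝕜 W] [NormedAddCommGroup X] [NormedSpace 𝕜 X]
  [NormedAddCommGroup Y] [NormedSpace 𝕜 Y] [NormedAddCommGroup Z] [NormedSpace 𝕜 Z]

theorem fderiv_prodMk_left_eq_comp_inl {F : X × Y → Z} {x : X} {y : Y}
    (hF : DifferentiableAt 𝕜 F (x, y)) :
    fderiv 𝕜 (fun x' => F (x', y)) x = (fderiv 𝕜 F (x, y)).comp (inl 𝕜 X Y) :=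
  (hF.hasFDerivAt.comp x (hasFDerivAt_prodMk_left x y)).fderiv

theorem fderiv_prodMk_right_eq_comp_inr {F : X × Y → Z} {x : X} {y : Y}
    (hF : DifferentiableAt 𝕜 F (x, y)) :
    fderiv 𝕜 (fun y' => F (x, y')) y = (fderiv 𝕜 F (x, y)).comp (inr 𝕜 X Y) :=
  (hF.hasFDerivAt.comp y (hasFDerivAt_prodMk_right x y)).fderiv

theorem fderiv_comp_prodMk_eq_add {F : X × Y → Z} {g : W → X} {h : W → Y} {w : W}
    (hF : DifferentiableAt 𝕜 F (g w, h w)) (hg : DifferentiableAt 𝕜 g w)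
    (hh : DifferentiableAt 𝕜 h w) :
    fderiv 𝕜 (fun w => F (g w, h w)) w =
      (fderiv 𝕜 (fun x => F (x, h w)) (g w)).comp (fderiv 𝕜 g w) +
        (fderiv 𝕜 (fun y => F (g w, y)) (h w)).comp (fderiv 𝕜 h w) := by
  have hchain : HasFDerivAt (fun w => F (g w, h w))
      ((fderiv 𝕜 F (g w, h w)).comp ((fderiv 𝕜 g w).prod (fderiv 𝕜 h w))) w :=
    hF.hasFDerivAt.comp w (hg.hasFDerivAt.prodMk hh.hasFDerivAt)
  rw [hchain.fderiv, fderiv_prodMk_left_eq_comp_inl hF, fderiv_prodMk_right_eq_comp_inr hF]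
  ext v
  exact ((fderiv 𝕜 F (g w, h w)).comp_inl_add_comp_inr _).symm

end PartialDerivatives

theorem norm_comp_sub_comp_le {𝕜 X Y Z : Type*} [NontriviallyNormedField 𝕜]
    [SeminormedAddCommGroup X] [NormedSpace 𝕜 X] [SeminormedAddCommGroup Y] [NormedSpace 𝕜 Y]
    [SeminormedAddCommGroup Z] [NormedSpace 𝕜 Z] (B B' : Y →L[𝕜] Z) (D D' : X →L[𝕜] Y) :
    ‖B.comp D - B'.comp D'‖ ≤ ‖B - B'‖ * ‖D‖ + ‖B'‖ * ‖D - D'‖ := by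
  have : B.comp D - B'.comp D' = (B - B').comp D + B'.comp (D - D') := by
    rw [sub_comp, comp_sub]; abel
  rw [this]
  exact (norm_add_le _ _).trans (add_le_add (opNorm_comp_le _ _) (opNorm_comp_le _ _))

theorem le_mul_geom_sum_of_le_add_mul {x C : ℕ → ℝ} {M : ℝ} (hM : 0 ≤ M) (hC : Monotone C)
    (h₀ : x 0 ≤ 0) (hsucc : ∀ i, x (i + 1) ≤ C i + M * x i) (i : ℕ) :
    x i ≤ C (i - 1) * ∑ j ∈ range i, M ^ j := by
  induction i with
  | zero => simpa using h₀
  | succ i ih =>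
    have hsum : 0 ≤ ∑ j ∈ range i, M ^ j := sum_nonneg fun j _ => pow_nonneg hM j
    have hCi : C (i - 1) ≤ C i := hC (Nat.sub_le i 1)
    calc x (i + 1) ≤ C i + M * (C (i - 1) * ∑ j ∈ range i, M ^ j) :=
          (hsucc i).trans (by gcongr)
      _ ≤ C i + M * (C i * ∑ j ∈ range i, M ^ j) := by gcongr
      _ = C (i + 1 - 1) * ∑ j ∈ range (i + 1), M ^ j := by
          rw [geom_sum_succ, Nat.add_sub_cancel]; ring

theorem Khat_monotone {Lπ Lf Lθ : ℝ} (hLπ : 0 ≤ Lπ) (hLf : 0 ≤ Lf) (hLθ : 0 ≤ Lθ) :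
    Monotone (Khat Lπ Lf Lθ) := fun m n hmn => by
  unfold Khat
  gcongr

section Rollout

variable {𝕜 Θ S A : Type*} [NontriviallyNormedField 𝕜]
  [NormedAddCommGroup Θ] [NormedSpace 𝕜 Θ]
  [NormedAddCommGroup S] [NormedSpace 𝕜 S]
  [NormedAddCommGroup A] [NormedSpace 𝕜 A]
  {π : Θ × S → A} {g f : S × A → S} {s₀ : S}

theorem differentiable_sHat (hπ : Differentiable 𝕜 π) (hg : Differentiable 𝕜 g) (i : ℕ) :
    Differentiable 𝕜 (sHat π g s₀ i) := by
  induction i with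
  | zero => exact differentiable_const _
  | succ i ih => exact hg.comp (ih.prodMk (hπ.comp (differentiable_id.prodMk ih)))

theorem differentiable_aHat (hπ : Differentiable 𝕜 π) (hg : Differentiable 𝕜 g) (i : ℕ) :
    Differentiable 𝕜 (aHat π g s₀ i) :=
  hπ.comp (differentiable_id.prodMk (differentiable_sHat hπ hg i))

theorem fderiv_aHat (hπ : Differentiable 𝕜 π) (hg : Differentiable 𝕜 g) (i : ℕ) (θ : Θ) :
    fderiv 𝕜 (aHat π g s₀ i) θ =
      fderiv 𝕜 (fun t => π (t, sHat π g s₀ i θ)) θ +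
        (fderiv 𝕜 (fun s => π (θ, s)) (sHat π g s₀ i θ)).comp (fderiv 𝕜 (sHat π g s₀ i) θ) := by
  have h := fderiv_comp_prodMk_eq_add (F := π) (hπ _) differentiableAt_id
    (differentiable_sHat (s₀ := s₀) hπ hg i θ)
  rwa [fderiv_id, comp_id] at h

theorem fderiv_sHat_succ (hπ : Differentiable 𝕜 π) (hg : Differentiable 𝕜 g) (i : ℕ) (θ : Θ) :
    fderiv 𝕜 (sHat π g s₀ (i + 1)) θ =
      (fderiv 𝕜 (fun s => g (s, aHat π g s₀ i θ)) (sHat π g s₀ i θ)).comp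
          (fderiv 𝕜 (sHat π g s₀ i) θ) +
        (fderiv 𝕜 (fun a => g (sHat π g s₀ i θ, a)) (aHat π g s₀ i θ)).comp
          (fderiv 𝕜 (aHat π g s₀ i) θ) :=
  fderiv_comp_prodMk_eq_add (hg _) (differentiable_sHat hπ hg i θ) (differentiable_aHat hπ hg i θ)

theorem norm_fderiv_aHat_le (hπ : Differentiable 𝕜 π) (hg : Differentiable 𝕜 g) {Lθ Lπ : ℝ}
    (hπθ : ∀ p : Θ × S, ‖fderiv 𝕜 (fun θ : Θ => π (θ, p.2)) p.1‖ ≤ Lθ)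
    (hπs : ∀ p : Θ × S, ‖fderiv 𝕜 (fun s : S => π (p.1, s)) p.2‖ ≤ Lπ) (i : ℕ) (θ : Θ) :
    ‖fderiv 𝕜 (aHat π g s₀ i) θ‖ ≤ Lθ + Lπ * ‖fderiv 𝕜 (sHat π g s₀ i) θ‖ := by
  rw [fderiv_aHat hπ hg]
  exact (norm_add_le _ _).trans (add_le_add (hπθ (θ, _))
    ((opNorm_comp_le _ _).trans (by gcongr; exact hπs (θ, _))))

theorem norm_fderiv_sHat_succ_le (hπ : Differentiable 𝕜 π) (hg : Differentiable 𝕜 g) {L : ℝ}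
    (hgs : ∀ p : S × A, ‖fderiv 𝕜 (fun s : S => g (s, p.2)) p.1‖ ≤ L)
    (hga : ∀ p : S × A, ‖fderiv 𝕜 (fun a : A => g (p.1, a)) p.2‖ ≤ L) (i : ℕ) (θ : Θ) :
    ‖fderiv 𝕜 (sHat π g s₀ (i + 1)) θ‖ ≤
      L * ‖fderiv 𝕜 (sHat π g s₀ i) θ‖ + L * ‖fderiv 𝕜 (aHat π g s₀ i) θ‖ := by
  rw [fderiv_sHat_succ hπ hg]
  exact (norm_add_le _ _).trans (add_le_add
    ((opNorm_comp_le _ _).trans (by gcongr; exact hgs (_, _)))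
    ((opNorm_comp_le _ _).trans (by gcongr; exact hga (_, _))))

theorem norm_fderiv_sHat_le (hπ : Differentiable 𝕜 π) (hg : Differentiable 𝕜 g) {Lθ Lπ L : ℝ}
    (hπθ : ∀ p : Θ × S, ‖fderiv 𝕜 (fun θ : Θ => π (θ, p.2)) p.1‖ ≤ Lθ)
    (hπs : ∀ p : Θ × S, ‖fderiv 𝕜 (fun s : S => π (p.1, s)) p.2‖ ≤ Lπ)
    (hgs : ∀ p : S × A, ‖fderiv 𝕜 (fun s : S => g (s, p.2)) p.1‖ ≤ L)
    (hga : ∀ p : S × A, ‖fderiv 𝕜 (fun a : A => g (p.1, a)) p.2‖ ≤ L) (i : ℕ) (θ : Θ) :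
    ‖fderiv 𝕜 (sHat π g s₀ i) θ‖ ≤ L * Lθ * ∑ j ∈ range i, (L * (1 + Lπ)) ^ j := by
  have hLπ : 0 ≤ Lπ := (norm_nonneg _).trans (hπs 0)
  have hL : 0 ≤ L := (norm_nonneg _).trans (hgs 0)
  refine le_mul_geom_sum_of_le_add_mul (x := fun i => ‖fderiv 𝕜 (sHat π g s₀ i) θ‖)
    (by positivity) monotone_const (by simp [sHat]) (fun i => ?_) i
  calc ‖fderiv 𝕜 (sHat π g s₀ (i + 1)) θ‖
      ≤ L * ‖fderiv 𝕜 (sHat π g s₀ i) θ‖ + L * ‖fderiv 𝕜 (aHat π g s₀ i) θ‖ :=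
        norm_fderiv_sHat_succ_le hπ hg hgs hga i θ
    _ ≤ L * ‖fderiv 𝕜 (sHat π g s₀ i) θ‖ + L * (Lθ + Lπ * ‖fderiv 𝕜 (sHat π g s₀ i) θ‖) := by
        gcongr; exact norm_fderiv_aHat_le hπ hg hπθ hπs i θ
    _ = L * Lθ + L * (1 + Lπ) * ‖fderiv 𝕜 (sHat π g s₀ i) θ‖ := by ring

theorem norm_fderiv_sHat_le_Khat (hπ : Differentiable 𝕜 π) (hg : Differentiable 𝕜 g)
    {Lθ Lπ L : ℝ} (hπθ : ∀ p : Θ × S, ‖fderiv 𝕜 (fun θ : Θ => π (θ, p.2)) p.1‖ ≤ Lθ)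
    (hπs : ∀ p : Θ × S, ‖fderiv 𝕜 (fun s : S => π (p.1, s)) p.2‖ ≤ Lπ)
    (hgs : ∀ p : S × A, ‖fderiv 𝕜 (fun s : S => g (s, p.2)) p.1‖ ≤ L)
    (hga : ∀ p : S × A, ‖fderiv 𝕜 (fun a : A => g (p.1, a)) p.2‖ ≤ L) (i : ℕ) (θ : Θ) :
    ‖fderiv 𝕜 (sHat π g s₀ i) θ‖ ≤ Khat Lπ L Lθ i := by
  have hLθ : 0 ≤ Lθ := (norm_nonneg _).trans (hπθ 0)
  have hLπ : 0 ≤ Lπ := (norm_nonneg _).trans (hπs 0)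
  have hs := norm_fderiv_sHat_le (s₀ := s₀) hπ hg hπθ hπs hgs hga i θ
  have hσ : 0 ≤ ‖fderiv 𝕜 (sHat π g s₀ i) θ‖ := norm_nonneg _
  unfold Khat
  nlinarith

theorem norm_fderiv_aHat_le_Khat (hπ : Differentiable 𝕜 π) (hg : Differentiable 𝕜 g)
    {Lθ Lπ L : ℝ} (hπθ : ∀ p : Θ × S, ‖fderiv 𝕜 (fun θ : Θ => π (θ, p.2)) p.1‖ ≤ Lθ)
    (hπs : ∀ p : Θ × S, ‖fderiv 𝕜 (fun s : S => π (p.1, s)) p.2‖ ≤ Lπ)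
    (hgs : ∀ p : S × A, ‖fderiv 𝕜 (fun s : S => g (s, p.2)) p.1‖ ≤ L)
    (hga : ∀ p : S × A, ‖fderiv 𝕜 (fun a : A => g (p.1, a)) p.2‖ ≤ L) (i : ℕ) (θ : Θ) :
    ‖fderiv 𝕜 (aHat π g s₀ i) θ‖ ≤ Khat Lπ L Lθ i := by
  have hLπ : 0 ≤ Lπ := (norm_nonneg _).trans (hπs 0)
  have hs := norm_fderiv_sHat_le (s₀ := s₀) hπ hg hπθ hπs hgs hga i θ
  have ha := norm_fderiv_aHat_le (s₀ := s₀) hπ hg hπθ hπs i θ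
  have hσ : 0 ≤ ‖fderiv 𝕜 (sHat π g s₀ i) θ‖ := norm_nonneg _
  unfold Khat
  nlinarith

theorem norm_fderiv_aHat_sub_le (hπ : Differentiable 𝕜 π) (hg : Differentiable 𝕜 g)
    (hf : Differentiable 𝕜 f) {Lθ Lπ : ℝ}
    (hπθ : ∀ p : Θ × S, ‖fderiv 𝕜 (fun θ : Θ => π (θ, p.2)) p.1‖ ≤ Lθ)
    (hπs : ∀ p : Θ × S, ‖fderiv 𝕜 (fun s : S => π (p.1, s)) p.2‖ ≤ Lπ) (i : ℕ) (θ : Θ) :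
    ‖fderiv 𝕜 (aHat π g s₀ i) θ - fderiv 𝕜 (aHat π f s₀ i) θ‖ ≤
      2 * Lθ + 2 * Lπ * ‖fderiv 𝕜 (sHat π g s₀ i) θ‖ +
        Lπ * ‖fderiv 𝕜 (sHat π g s₀ i) θ - fderiv 𝕜 (sHat π f s₀ i) θ‖ := by
  rw [fderiv_aHat hπ hg, fderiv_aHat hπ hf, add_sub_add_comm]
  have hPθ := (norm_sub_le _ _).trans (add_le_add (hπθ (θ, sHat π g s₀ i θ))
    (hπθ (θ, sHat π f s₀ i θ)))
  have hPs := (norm_sub_le _ _).trans (add_le_add (hπs (θ, sHat π g s₀ i θ))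
    (hπs (θ, sHat π f s₀ i θ)))
  refine (norm_add_le _ _).trans ?_
  grw [norm_comp_sub_comp_le, hPθ, hPs, hπs (θ, sHat π f s₀ i θ)]
  linarith

theorem norm_fderiv_sHat_succ_sub_le (hπ : Differentiable 𝕜 π) (hg : Differentiable 𝕜 g)
    (hf : Differentiable 𝕜 f) {L : ℝ}
    (hfs : ∀ p : S × A, ‖fderiv 𝕜 (fun s : S => f (s, p.2)) p.1‖ ≤ L)
    (hfa : ∀ p : S × A, ‖fderiv 𝕜 (fun a : A => f (p.1, a)) p.2‖ ≤ L) (i : ℕ) (θ : Θ) :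
    ‖fderiv 𝕜 (sHat π g s₀ (i + 1)) θ - fderiv 𝕜 (sHat π f s₀ (i + 1)) θ‖ ≤
      ‖fderiv 𝕜 (fun s => g (s, aHat π g s₀ i θ)) (sHat π g s₀ i θ) -
          fderiv 𝕜 (fun s => f (s, aHat π f s₀ i θ)) (sHat π f s₀ i θ)‖ *
          ‖fderiv 𝕜 (sHat π g s₀ i) θ‖ +
        L * ‖fderiv 𝕜 (sHat π g s₀ i) θ - fderiv 𝕜 (sHat π f s₀ i) θ‖ +
      (‖fderiv 𝕜 (fun a => g (sHat π g s₀ i θ, a)) (aHat π g s₀ i θ) -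
          fderiv 𝕜 (fun a => f (sHat π f s₀ i θ, a)) (aHat π f s₀ i θ)‖ *
          ‖fderiv 𝕜 (aHat π g s₀ i) θ‖ +
        L * ‖fderiv 𝕜 (aHat π g s₀ i) θ - fderiv 𝕜 (aHat π f s₀ i) θ‖) := by
  rw [fderiv_sHat_succ hπ hg, fderiv_sHat_succ hπ hf, add_sub_add_comm]
  refine (norm_add_le _ _).trans ?_
  grw [norm_comp_sub_comp_le, norm_comp_sub_comp_le, hfs (_, _), hfa (_, _)]

end Rollout

/-- **Derivative-bias propagation, action part** (equation (36)). Comparing the model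
rollout (dynamics `f̂`) with the true rollout (dynamics `f`) from the same initial state:
if `ε_f` bounds the sum of the partial-derivative errors of the model along the rollouts,
then for `i ≥ 1`,
`‖D_θ â_i(θ) − D_θ a_i(θ)‖ ≤ L_π ((ε_f + 2 L_f L_π) K̂(i−1) + 2 L_f L_θ) ∑_{j<i} M_f^j
  + 2 L_π K̂(i) + 2 L_θ`, `M_f = L_f (1 + L_π)`. -/
theorem stmt8 {Θ S A : Type*}
    [NormedAddCommGroup Θ] [NormedSpace ℝ Θ]
    [NormedAddCommGroup S] [NormedSpace ℝ S]
    [NormedAddCommGroup A] [NormedSpace ℝ A]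
    (π : Θ × S → A) (fh f : S × A → S) (s₀ : S)
    (Lθ Lπ Lfh Lf εf : ℝ) (hεf : 0 ≤ εf)
    (hπdiff : Differentiable ℝ π)
    (hπθ : ∀ p : Θ × S, ‖fderiv ℝ (fun θ : Θ => π (θ, p.2)) p.1‖ ≤ Lθ)
    (hπs : ∀ p : Θ × S, ‖fderiv ℝ (fun s : S => π (p.1, s)) p.2‖ ≤ Lπ)
    (hfhdiff : Differentiable ℝ fh)
    (hfhs : ∀ p : S × A, ‖fderiv ℝ (fun s : S => fh (s, p.2)) p.1‖ ≤ Lfh)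
    (hfha : ∀ p : S × A, ‖fderiv ℝ (fun a : A => fh (p.1, a)) p.2‖ ≤ Lfh)
    (hfdiff : Differentiable ℝ f)
    (hfs : ∀ p : S × A, ‖fderiv ℝ (fun s : S => f (s, p.2)) p.1‖ ≤ Lf)
    (hfa : ∀ p : S × A, ‖fderiv ℝ (fun a : A => f (p.1, a)) p.2‖ ≤ Lf)
    (hmodelerr : ∀ i : ℕ, 1 ≤ i → ∀ θ : Θ,
      ‖fderiv ℝ (fun s : S => fh (s, aHat π fh s₀ (i - 1) θ)) (sHat π fh s₀ (i - 1) θ) -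
          fderiv ℝ (fun s : S => f (s, aHat π f s₀ (i - 1) θ)) (sHat π f s₀ (i - 1) θ)‖ +
        ‖fderiv ℝ (fun a : A => fh (sHat π fh s₀ (i - 1) θ, a)) (aHat π fh s₀ (i - 1) θ) -
          fderiv ℝ (fun a : A => f (sHat π f s₀ (i - 1) θ, a)) (aHat π f s₀ (i - 1) θ)‖ ≤
        εf) :
    ∀ i : ℕ, 1 ≤ i → ∀ θ : Θ,
      ‖fderiv ℝ (aHat π fh s₀ i) θ - fderiv ℝ (aHat π f s₀ i) θ‖ ≤
        Lπ * (((εf + 2 * Lf * Lπ) * Khat Lπ Lfh Lθ (i - 1) + 2 * Lf * Lθ) *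
            ∑ j ∈ Finset.range i, (Lf * (1 + Lπ)) ^ j) +
          2 * Lπ * Khat Lπ Lfh Lθ i + 2 * Lθ := by
  have hLθ : 0 ≤ Lθ := (norm_nonneg _).trans (hπθ 0)
  have hLπ : 0 ≤ Lπ := (norm_nonneg _).trans (hπs 0)
  have hLfh : 0 ≤ Lfh := (norm_nonneg _).trans (hfhs 0)
  have hLf : 0 ≤ Lf := (norm_nonneg _).trans (hfs 0)
  set K := Khat Lπ Lfh Lθ
  have hKs := norm_fderiv_sHat_le_Khat (s₀ := s₀) hπdiff hfhdiff hπθ hπs hfhs hfha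
  have hKa := norm_fderiv_aHat_le_Khat (s₀ := s₀) hπdiff hfhdiff hπθ hπs hfhs hfha
  have hΔa : ∀ i θ, ‖fderiv ℝ (aHat π fh s₀ i) θ - fderiv ℝ (aHat π f s₀ i) θ‖ ≤
      2 * Lθ + 2 * Lπ * K i +
        Lπ * ‖fderiv ℝ (sHat π fh s₀ i) θ - fderiv ℝ (sHat π f s₀ i) θ‖ := fun i θ => by
    grw [norm_fderiv_aHat_sub_le hπdiff hfhdiff hfdiff hπθ hπs i θ, hKs i θ]
  have hΔs : ∀ θ i, ‖fderiv ℝ (sHat π fh s₀ i) θ - fderiv ℝ (sHat π f s₀ i) θ‖ ≤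
      ((εf + 2 * Lf * Lπ) * K (i - 1) + 2 * Lf * Lθ) *
        ∑ j ∈ Finset.range i, (Lf * (1 + Lπ)) ^ j := fun θ => by
    refine le_mul_geom_sum_of_le_add_mul
      (x := fun i => ‖fderiv ℝ (sHat π fh s₀ i) θ - fderiv ℝ (sHat π f s₀ i) θ‖)
      (by positivity) (((Khat_monotone hLπ hLfh hLθ).const_mul (by positivity)).add_const _)
      (by simp [sHat]) fun i => ?_
    have hε := hmodelerr (i + 1) (Nat.le_add_left 1 i) θ
    rw [Nat.add_sub_cancel] at hε
    have hK : 0 ≤ K i := (norm_nonneg _).trans (hKs i θ)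
    grw [norm_fderiv_sHat_succ_sub_le hπdiff hfhdiff hfdiff hfs hfa i θ, hΔa i θ, hKs i θ,
      hKa i θ]
    linarith [mul_le_mul_of_nonneg_right hε hK]
  intro i _ θ
  grw [hΔa i θ, hΔs θ i]
  linarith
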